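/- Let n ≥ 1, let λ be a partition with l(λ) = n, and let μ ⊆ λ be a partition with l(μ) = n−1. Then the following identity holds in ℤ[t]: Σ_β φ_{λ/β}(t²) · t^{2(|β|−|μ|)} · sk_{β/μ}(t²) = t² · sk_{λ/μ}(t²), where the sum is over all partitions β with μ ⊆ β, β ≼ λ (i.e. λ/β is a horizontal strip), and l(β) = n. -/

import Mathlib

open scoped BigOperators Classical

namespace EK

/-- Conjugate partition: `conj f j = #{i : f i ≥ j}` (parts of `f` are `f 0, f 1, …`,
i.e. `f i = λ_{i+1}`). -/
noncomputable def conj (f : ℕ → ℕ) (j : ℕ) : ℕ := Nat.card {i : ℕ // j ≤ f i}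

/-- `f` represents a partition: weakly decreasing with finitely many nonzero parts. -/
def IsPartition (f : ℕ → ℕ) : Prop := Antitone f ∧ ∃ N, ∀ i, N ≤ i → f i = 0

/-- `l(f) = n`: the first `n` parts are positive, the rest vanish. -/
def HasLength (f : ℕ → ℕ) (n : ℕ) : Prop := (∀ i < n, 0 < f i) ∧ ∀ i, n ≤ i → f i = 0

/-- `|λ| = Σ_i λ_i`. -/
noncomputable def psize (f : ℕ → ℕ) : ℕ := ∑ᶠ i, f i

/-- `n(λ) = Σ_{i ≥ 1} (i-1) λ_i` (0-indexed: `Σ_i i * f i`). -/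
noncomputable def nstat (f : ℕ → ℕ) : ℕ := ∑ᶠ i, i * f i

/-- `φ_r(u) = ∏_{i=1}^r (1 - u^i)`. -/
def phiPoch {F : Type*} [Field F] (u : F) (r : ℕ) : F := ∏ i ∈ Finset.Icc 1 r, (1 - u ^ i)

/-- Gaussian binomial `binom(a,b)_u = φ_a(u)/(φ_b(u) φ_{a-b}(u))` for `0 ≤ b ≤ a`, `0` otherwise. -/
noncomputable def gauss {F : Type*} [Field F] (u : F) (a b : ℤ) : F :=
  if 0 ≤ b ∧ b ≤ a then phiPoch u a.toNat / (phiPoch u b.toNat * phiPoch u (a - b).toNat)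
  else 0

/-- `sk_{λ/μ}(u) = u^{Σ_{j≥1} C(λ'_j - μ'_j, 2)} ∏_{j≥1} binom(λ'_j - μ'_{j+1}, m_j(μ))_u`
(the factors for `j > λ_1` are all `1` and the exponents vanish there, so the product and
sum are taken over `1 ≤ j ≤ λ_1 = f 0`). -/
noncomputable def sk {F : Type*} [Field F] (u : F) (f g : ℕ → ℕ) : F :=
  u ^ (∑ j ∈ Finset.Icc 1 (f 0), Nat.choose (conj f j - conj g j) 2) *
    ∏ j ∈ Finset.Icc 1 (f 0),
      gauss u ((conj f j : ℤ) - (conj g (j + 1) : ℤ)) ((conj g j : ℤ) - (conj g (j + 1) : ℤ))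

/-- `μ ⊆ λ` and `λ/μ` is a horizontal strip, i.e. `λ'_j - μ'_j ∈ {0,1}` for all `j ≥ 1`. -/
def IsHStrip (f g : ℕ → ℕ) : Prop :=
  (∀ i, g i ≤ f i) ∧ ∀ j, 1 ≤ j → conj f j ≤ conj g j + 1

/-- `φ_{λ/μ}(u) = ∏_{j ≥ 1, λ'_j = μ'_j + 1, λ'_{j+1} = μ'_{j+1}} (1 - u^{m_j(λ)})` if `λ/μ` is
a horizontal strip, and `0` otherwise (factors with `j > λ_1` never occur). -/
noncomputable def phiStrip {F : Type*} [Field F] (u : F) (f g : ℕ → ℕ) : F :=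
  if IsHStrip f g then
    ∏ j ∈ (Finset.Icc 1 (f 0)).filter
        (fun j => conj f j = conj g j + 1 ∧ conj f (j + 1) = conj g (j + 1)),
      (1 - u ^ (conj f j - conj f (j + 1)))
  else 0

/-- `b_λ(u) = ∏_{i ≥ 1} φ_{m_i(λ)}(u)` (factors with `i > λ_1` are `1`). -/
noncomputable def bcoef {F : Type*} [Field F] (u : F) (f : ℕ → ℕ) : F :=
  ∏ i ∈ Finset.Icc 1 (f 0), phiPoch u (conj f i - conj f (i + 1))

/-!
Since `λ/β` is a horizontal strip and `l(β) = l(λ)`, the partition `β` is `λ` with the bottom box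
removed from each column of a set `s ⊆ {2, …, λ₁}`, i.e. `β' = λ' - 𝟙_s`. Writing `a = λ'` and
`b = μ'`, the summand of `β` factors into a weight for each column `j`, depending on whether
`j ∈ s`, times `1 - u^(a_j - a_{j+1})` for every `j ∈ s` with `j + 1 ∉ s`. The sum over `s` is a
transfer-matrix sum, evaluated by induction on the last column `N`: summing over whether `N ∈ s`,
the `q`-Pascal rule `(1 - u^(A-d)) [A, d] = (1 - u^A) [A-1, d]` produces the factor
`[a_N - b_{N+1}, b_N - b_{N+1}]` of `sk_{λ/μ}` and leaves the same kind of sum with `a_N`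
lowered to `b_N`. Sets `s` that do not come from a partition `β ⊇ μ` have weight `0`, so the sum
may run over all `s`.
-/

open Finset

section Transfer

variable {F : Type*} [Field F] {u : F}

lemma phiPoch_succ (r : ℕ) : phiPoch u (r + 1) = phiPoch u r * (1 - u ^ (r + 1)) :=
  prod_Icc_succ_top (by omega) _

lemma phiPoch_ne_zero (hu : ∀ i, 1 ≤ i → (1 : F) - u ^ i ≠ 0) (r : ℕ) : phiPoch u r ≠ 0 :=
  prod_ne_zero_iff.mpr fun i hi => hu i (mem_Icc.mp hi).1

lemma gauss_natCast {A d : ℕ} (h : d ≤ A) :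
    gauss u A d = phiPoch u A / (phiPoch u d * phiPoch u (A - d)) := by
  rw [gauss, if_pos ⟨by positivity, by exact_mod_cast h⟩]
  congr 3; omega

lemma one_sub_pow_mul_gauss (hu : ∀ i, 1 ≤ i → (1 : F) - u ^ i ≠ 0) {A d : ℕ} (h : d ≤ A) :
    (1 - u ^ (A - d)) * gauss u A d = (1 - u ^ A) * gauss u ((A : ℤ) - 1) d := by
  obtain ⟨k, rfl⟩ | rfl := (Nat.lt_or_eq_of_le h).imp_left Nat.exists_eq_add_of_lt
  · have hA : ((d + k + 1 : ℕ) : ℤ) - 1 = ((d + k : ℕ) : ℤ) := by push_cast; ring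
    rw [hA, gauss_natCast h, gauss_natCast (by omega), phiPoch_succ (d + k),
      show d + k + 1 - d = k + 1 by omega, show d + k - d = k by omega, phiPoch_succ k]
    have := phiPoch_ne_zero hu d
    have := phiPoch_ne_zero hu k
    have := hu (k + 1) (by omega)
    field_simp
  · rw [Nat.sub_self, pow_zero, sub_self, zero_mul, gauss, if_neg (by omega), mul_zero]

noncomputable def skFactor (u : F) (a b : ℕ → ℕ) (j : ℕ) : F :=
  gauss u ((a j : ℤ) - b (j + 1)) ((b j : ℤ) - b (j + 1))

noncomputable def colWeight (u : F) (a b : ℕ → ℕ) (s : Finset ℕ) (j : ℕ) : F :=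
  if j ∈ s then gauss u ((a j : ℤ) - b (j + 1) - 1) ((b j : ℤ) - b (j + 1))
  else u ^ (a j - b j) * skFactor u a b j

noncomputable def linkWeight (u : F) (a : ℕ → ℕ) (s : Finset ℕ) (j : ℕ) : F :=
  if j ∈ s ∧ j + 1 ∉ s then 1 - u ^ (a j - a (j + 1)) else 1

/- With `a = λ'` and `b = μ'`, this is the summand of `β` with `β' = a - 𝟙_s` (the bottom box of
each column in `s` removed), divided by `u ^ ∑ⱼ C(aⱼ - bⱼ, 2)`. -/
noncomputable def subsetWeight (u : F) (a b : ℕ → ℕ) (I s : Finset ℕ) : F :=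
  (∏ j ∈ I, colWeight u a b s j) * ∏ j ∈ I, linkWeight u a s j

def IsAdmissible (a b : ℕ → ℕ) (s : Finset ℕ) : Prop :=
  (∀ j ∈ s, b j < a j) ∧ ∀ j ∈ s, a (j + 1) = a j → j + 1 ∈ s

lemma subsetWeight_eq_zero {a b : ℕ → ℕ} {I s : Finset ℕ} (hs : s ⊆ I) (h : ¬IsAdmissible a b s) :
    subsetWeight u a b I s = 0 := by
  simp only [IsAdmissible, not_and_or, not_forall, not_lt, exists_prop] at h
  rcases h with ⟨j, hj, hab⟩ | ⟨j, hj, heq, hj1⟩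
  · refine mul_eq_zero_of_left (prod_eq_zero (hs hj) ?_) _
    rw [colWeight, if_pos hj, gauss, if_neg (by omega)]
  · refine mul_eq_zero_of_right _ (prod_eq_zero (hs hj) ?_)
    rw [linkWeight, if_pos ⟨hj, hj1⟩, heq, Nat.sub_self, pow_zero, sub_self]

lemma subsetWeight_Icc {a b : ℕ → ℕ} {m N : ℕ} {s : Finset ℕ} (hmN : m ≤ N) (hs : s ⊆ Ioc m N) :
    subsetWeight u a b (Icc m N) s
      = u ^ (a m - b m) * skFactor u a b m * subsetWeight u a b (Ioc m N) s := by
  have hm : m ∉ s := fun h => by simpa using hs h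
  rw [subsetWeight, subsetWeight, ← Ioc_insert_left hmN, prod_insert left_notMem_Ioc,
    prod_insert left_notMem_Ioc, colWeight, if_neg hm, linkWeight, if_neg (by tauto), one_mul,
    mul_assoc]

lemma one_sub_pow_mul_skFactor (hu : ∀ i, 1 ≤ i → (1 : F) - u ^ i ≠ 0) {a b : ℕ → ℕ} {j : ℕ}
    (hb : b (j + 1) ≤ b j) (hba : b j ≤ a j) :
    (1 - u ^ (a j - b j)) * skFactor u a b j
      = (1 - u ^ (a j - b (j + 1))) *
          gauss u ((a j : ℤ) - b (j + 1) - 1) ((b j : ℤ) - b (j + 1)) := by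
  have h := one_sub_pow_mul_gauss hu (A := a j - b (j + 1)) (d := b j - b (j + 1)) (by omega)
  rw [show a j - b (j + 1) - (b j - b (j + 1)) = a j - b j by omega] at h
  push_cast [hb, hb.trans hba] at h
  exact h

lemma prod_colWeight_update {a : ℕ → ℕ} (b : ℕ → ℕ) (s : Finset ℕ) (m N c : ℕ) :
    ∏ j ∈ Ioc m N, colWeight u (Function.update a (N + 1) c) b s j
      = ∏ j ∈ Ioc m N, colWeight u a b s j :=
  prod_congr rfl fun j hj => by
    simp [colWeight, skFactor, Function.update_of_ne (show j ≠ N + 1 by grind)]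

lemma prod_skFactor_update {a : ℕ → ℕ} (b : ℕ → ℕ) (m N c : ℕ) :
    ∏ j ∈ Ioc m N, skFactor u (Function.update a (N + 1) c) b j
      = ∏ j ∈ Ioc m N, skFactor u a b j :=
  prod_congr rfl fun j hj => by
    simp [skFactor, Function.update_of_ne (show j ≠ N + 1 by grind)]

lemma prod_colWeight_insert (a b : ℕ → ℕ) {t : Finset ℕ} {m N : ℕ} :
    ∏ j ∈ Ioc m N, colWeight u a b (insert (N + 1) t) j = ∏ j ∈ Ioc m N, colWeight u a b t j :=
  prod_congr rfl fun j hj => by simp [colWeight, show j ≠ N + 1 by grind]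

lemma prod_linkWeight_update {a : ℕ → ℕ} {m N : ℕ} {t : Finset ℕ} (ht : t ⊆ Ioc m N) (c : ℕ) :
    ∏ j ∈ Ioc m N, linkWeight u (Function.update a (N + 1) c) t j
      = (∏ j ∈ Ioc m N, linkWeight u a (insert (N + 1) t) j) *
          if N ∈ t then 1 - u ^ (a N - c) else 1 := by
  have hN : N + 1 ∉ t := fun h => by simpa using ht h
  have hcut : ∀ j ∈ Ioc m N, linkWeight u (Function.update a (N + 1) c) t j
      = linkWeight u a (insert (N + 1) t) j *
          if j = N then (if N ∈ t then 1 - u ^ (a N - c) else 1) else 1 := by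
    intro j hj
    obtain rfl | hjN := eq_or_ne j N
    · simp [linkWeight, hN]
    · simp [linkWeight, hjN, show j ≠ N + 1 by grind]
  rw [prod_congr rfl hcut, prod_mul_distrib, prod_ite_eq']
  by_cases hN' : N ∈ Ioc m N
  · rw [if_pos hN']
  · rw [if_neg hN', if_neg fun h => hN' (ht h)]

lemma subsetWeight_add_subsetWeight_insert (hu : ∀ i, 1 ≤ i → (1 : F) - u ^ i ≠ 0)
    {a b : ℕ → ℕ} {m N : ℕ} (hmN : m ≤ N) {t : Finset ℕ} (ht : t ⊆ Ioc m N)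
    (ha : N ∈ t → a (N + 1) ≤ a N) (hb : b (N + 2) ≤ b (N + 1)) (hba : b (N + 1) ≤ a (N + 1))
    (hN : a (N + 2) = b (N + 2)) :
    subsetWeight u a b (Ioc m (N + 1)) t + subsetWeight u a b (Ioc m (N + 1)) (insert (N + 1) t)
      = skFactor u a b (N + 1) *
          subsetWeight u (Function.update a (N + 1) (b (N + 1))) b (Ioc m N) t := by
  have hnot : N + 1 ∉ Ioc m N := by simp
  have hNt : N + 1 ∉ t := fun h => hnot (ht h)
  have hN2 : N + 2 ∉ t := fun h => by simpa using ht h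
  have hlink := prod_linkWeight_update (u := u) (a := a) ht (a (N + 1))
  rw [Function.update_eq_self] at hlink
  have hcol : colWeight u a b t (N + 1) = u ^ (a (N + 1) - b (N + 1)) * skFactor u a b (N + 1) :=
    if_neg hNt
  have hcol' : colWeight u a b (insert (N + 1) t) (N + 1)
      = gauss u ((a (N + 1) : ℤ) - b (N + 2) - 1) ((b (N + 1) : ℤ) - b (N + 2)) :=
    if_pos (mem_insert_self _ _)
  have hlk : linkWeight u a t (N + 1) = 1 := if_neg (by tauto)
  have hlk' : linkWeight u a (insert (N + 1) t) (N + 1) = 1 - u ^ (a (N + 1) - b (N + 2)) := by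
    rw [linkWeight, if_pos (by simp [hN2]), hN]
  have hpascal := one_sub_pow_mul_skFactor hu hb hba
  have hend : u ^ (a (N + 1) - b (N + 1)) * (if N ∈ t then 1 - u ^ (a N - a (N + 1)) else 1)
      + (1 - u ^ (a (N + 1) - b (N + 1))) = if N ∈ t then 1 - u ^ (a N - b (N + 1)) else 1 := by
    split_ifs with hNt'
    · rw [show a N - b (N + 1) = (a N - a (N + 1)) + (a (N + 1) - b (N + 1)) by
        have := ha hNt'; omega, pow_add]
      ring
    · ring
  rw [← insert_Ioc_right_eq_Ioc_add_one hmN]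
  simp only [subsetWeight, prod_insert hnot, prod_colWeight_update, prod_colWeight_insert,
    prod_linkWeight_update ht, hlink, hcol, hcol', hlk, hlk']
  linear_combination ((∏ j ∈ Ioc m N, colWeight u a b t j) *
    ∏ j ∈ Ioc m N, linkWeight u a (insert (N + 1) t) j) * (skFactor u a b (N + 1) * hend - hpascal)

theorem sum_subsetWeight_Ioc (hu : ∀ i, 1 ≤ i → (1 : F) - u ^ i ≠ 0) {m N : ℕ} (hmN : m ≤ N)
    {a b : ℕ → ℕ} (ha : ∀ j ∈ Ioc m N, a (j + 1) ≤ a j) (hb : ∀ j ∈ Ioc m N, b (j + 1) ≤ b j)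
    (hba : ∀ j ∈ Ioc m N, b j ≤ a j) (hN : a (N + 1) = b (N + 1)) :
    ∑ s ∈ (Ioc m N).powerset, subsetWeight u a b (Ioc m N) s
      = ∏ j ∈ Ioc m N, skFactor u a b j := by
  induction N, hmN using Nat.le_induction generalizing a with
  | base => simp [subsetWeight]
  | succ N hmN ih =>
    have hIoc : Ioc m (N + 1) = insert (N + 1) (Ioc m N) :=
      (insert_Ioc_right_eq_Ioc_add_one hmN).symm
    have hnot : N + 1 ∉ Ioc m N := by simp
    have hsucc : N + 1 ∈ Ioc m (N + 1) := by simp; omega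
    have hle : ∀ j ∈ Ioc m N, j ∈ Ioc m (N + 1) := fun j hj => hIoc ▸ mem_insert_of_mem hj
    have ih' := ih (a := Function.update a (N + 1) (b (N + 1)))
      (fun j hj => by
        obtain rfl | hjN := eq_or_ne j N
        · simpa using (hba _ hsucc).trans (ha j (hle j hj))
        · simpa [show j ≠ N + 1 by grind, hjN] using ha j (hle j hj))
      (fun j hj => hb j (hle j hj))
      (fun j hj => by simpa [show j ≠ N + 1 by grind] using hba j (hle j hj))
      (by simp)
    rw [prod_skFactor_update] at ih'
    rw [hIoc, sum_powerset_insert hnot, prod_insert hnot, ← ih', mul_sum, ← sum_add_distrib,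
      ← hIoc]
    exact sum_congr rfl fun t ht => subsetWeight_add_subsetWeight_insert hu hmN
      (mem_powerset.mp ht) (fun h => ha N (hle N (mem_powerset.mp ht h))) (hb _ hsucc)
      (hba _ hsucc) hN

end Transfer

section Conjugate

variable {f g : ℕ → ℕ} {i j n M : ℕ}

lemma conj_eq_of_forall_le_iff {k : ℕ} (hk : ∀ i, j ≤ f i ↔ i < k) : conj f j = k := by
  rw [conj, Nat.card_congr ((Equiv.subtypeEquivRight hk).trans Fin.equivSubtype.symm),
    Nat.card_fin]

lemma conj_eq_zero_of_lt (hf : Antitone f) (hj : f 0 < j) : conj f j = 0 :=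
  conj_eq_of_forall_le_iff fun i => iff_of_false (by have := hf i.zero_le; omega) (by omega)

lemma IsPartition.exists_forall_le_iff (hf : IsPartition f) (hj : 1 ≤ j) :
    ∃ k, ∀ i, j ≤ f i ↔ i < k := by
  obtain ⟨N, hN⟩ := hf.2
  have h : ∃ i, f i < j := ⟨N, by rw [hN N le_rfl]; omega⟩
  refine ⟨Nat.find h, fun i => ⟨fun hi => ?_, fun hi => not_lt.mp (Nat.find_min h hi)⟩⟩
  by_contra hk
  have := hf.1 (not_lt.mp hk)
  have := Nat.find_spec h
  omega

lemma IsPartition.lt_conj_iff (hf : IsPartition f) (hj : 1 ≤ j) : i < conj f j ↔ j ≤ f i := by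
  obtain ⟨k, hk⟩ := hf.exists_forall_le_iff hj
  rw [conj_eq_of_forall_le_iff hk, hk]

lemma IsPartition.conj_succ_le (hf : IsPartition f) (hj : 1 ≤ j) : conj f (j + 1) ≤ conj f j := by
  by_contra! h
  have := (hf.lt_conj_iff (j := j + 1) (by omega)).mp h
  exact lt_irrefl _ ((hf.lt_conj_iff hj).mpr (by omega))

lemma IsPartition.conj_pos (hf : IsPartition f) (hj : 1 ≤ j) (hjf : j ≤ f 0) : 0 < conj f j :=
  (hf.lt_conj_iff hj).mpr hjf

lemma HasLength.conj_one (hfl : HasLength f n) : conj f 1 = n :=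
  conj_eq_of_forall_le_iff fun i => ⟨fun hi => by by_contra! h; have := hfl.2 i h; omega,
    fun hi => hfl.1 i hi⟩

lemma IsPartition.hasLength_iff (hf : IsPartition f) : HasLength f n ↔ conj f 1 = n := by
  refine ⟨HasLength.conj_one, fun h => ⟨fun i hi => ?_, fun i hi => ?_⟩⟩
  · exact (hf.lt_conj_iff le_rfl).mp (h ▸ hi)
  · by_contra h0
    have := (hf.lt_conj_iff le_rfl).mpr (Nat.one_le_iff_ne_zero.mpr h0)
    omega

lemma IsPartition.le_iff_conj_le (hf : IsPartition f) (hg : IsPartition g) :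
    (∀ i, g i ≤ f i) ↔ ∀ j, 1 ≤ j → conj g j ≤ conj f j := by
  refine ⟨fun h j hj => ?_, fun h i => ?_⟩
  · by_contra! hlt
    exact lt_irrefl _ ((hf.lt_conj_iff hj).mpr
      (((hg.lt_conj_iff hj).mp hlt).trans (h (conj f j))))
  · rcases Nat.eq_zero_or_pos (g i) with h0 | hpos
    · omega
    · exact (hf.lt_conj_iff hpos).mp
        (((hg.lt_conj_iff hpos).mpr le_rfl).trans_le (h (g i) hpos))

def ofConj (c : ℕ → ℕ) (M : ℕ) (i : ℕ) : ℕ := #{j ∈ Icc 1 M | i < c j}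

lemma ofConj_le (c : ℕ → ℕ) (M i : ℕ) : ofConj c M i ≤ M :=
  (card_filter_le _ _).trans (by simp)

lemma ofConj_congr {c c' : ℕ → ℕ} (h : ∀ j ∈ Icc 1 M, c j = c' j) : ofConj c M = ofConj c' M :=
  funext fun i => congrArg card (filter_congr fun j hj => by rw [h j hj])

lemma isPartition_ofConj (c : ℕ → ℕ) (M : ℕ) : IsPartition (ofConj c M) := by
  refine ⟨fun i i' hii' => card_le_card fun j => ?_, ∑ j ∈ Icc 1 M, c j, fun i hi => ?_⟩
  · simp only [mem_filter]
    exact fun h => ⟨h.1, hii'.trans_lt h.2⟩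
  · refine card_eq_zero.mpr (filter_eq_empty_iff.mpr fun j hj => ?_)
    have := single_le_sum (fun _ _ => Nat.zero_le _) hj (f := c)
    omega

lemma conj_ofConj {c : ℕ → ℕ} (hc : ∀ j, 1 ≤ j → c (j + 1) ≤ c j) (hj : 1 ≤ j) (hjM : j ≤ M) :
    conj (ofConj c M) j = c j := by
  have hanti : ∀ j', j ≤ j' → c j' ≤ c j :=
    fun j' hj' => Nat.rel_of_forall_rel_succ_of_le_of_le (· ≥ ·) hc hj hj'
  refine conj_eq_of_forall_le_iff fun i => ⟨fun h => ?_, fun h => ?_⟩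
  · by_contra! hci
    have : ({j' ∈ Icc 1 M | i < c j'} : Finset ℕ) ⊆ Icc 1 (j - 1) := fun j' hj' => by
      simp only [mem_filter, mem_Icc] at hj' ⊢
      have := fun hle => (hanti j' hle).trans hci
      omega
    have := card_le_card this
    simp only [Nat.card_Icc] at this
    exact absurd h (by unfold ofConj; omega)
  · have : Icc 1 j ⊆ ({j' ∈ Icc 1 M | i < c j'} : Finset ℕ) := fun j' hj' => by
      simp only [mem_filter, mem_Icc] at hj' ⊢
      exact ⟨⟨hj'.1, hj'.2.trans hjM⟩,
        h.trans_le (Nat.rel_of_forall_rel_succ_of_le_of_le (· ≥ ·) hc hj'.1 hj'.2)⟩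
    simpa [ofConj] using card_le_card this

lemma IsPartition.ofConj_conj (hf : IsPartition f) (hM : f 0 ≤ M) : ofConj (conj f) M = f := by
  funext i
  rw [ofConj, show f i = #(Icc 1 (f i)) by simp]
  congr 1
  ext j
  simp only [mem_filter, mem_Icc]
  have := hf.1 i.zero_le
  constructor
  · exact fun h => ⟨h.1.1, (hf.lt_conj_iff h.1.1).mp h.2⟩
  · exact fun h => ⟨⟨h.1, by omega⟩, (hf.lt_conj_iff h.1).mpr h.2⟩

lemma IsPartition.psize_eq_sum_conj (hf : IsPartition f) (hM : f 0 ≤ M) :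
    psize f = ∑ j ∈ Icc 1 M, conj f j := by
  obtain ⟨N, hN⟩ := hf.2
  have hsupp : Function.support f ⊆ ↑(range N) := fun i hi => by
    by_contra h
    exact hi (hN i (by simpa using h))
  rw [psize, finsum_eq_sum_of_support_subset f hsupp]
  conv_lhs => rw [← hf.ofConj_conj hM]
  simp only [ofConj, card_filter]
  rw [sum_comm]
  refine sum_congr rfl fun j hj => ?_
  have hj1 : 1 ≤ j := (mem_Icc.mp hj).1
  have hle : conj f j ≤ N := by
    by_contra! h
    have := (hf.lt_conj_iff hj1).mp h
    rw [hN N le_rfl] at this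
    omega
  rw [← card_filter, show ({i ∈ range N | i < conj f j} : Finset ℕ) = range (conj f j) by
    ext i; simp only [mem_filter, mem_range]; omega, card_range]

end Conjugate

section ColumnSets

variable {f g β : ℕ → ℕ} {n : ℕ} {s : Finset ℕ}

noncomputable def removeColumnEnds (f : ℕ → ℕ) (s : Finset ℕ) : ℕ → ℕ :=
  ofConj (fun j => conj f j - if j ∈ s then 1 else 0) (f 0)

noncomputable def changedColumns (f β : ℕ → ℕ) : Finset ℕ :=
  {j ∈ Ioc 1 (f 0) | conj β j ≠ conj f j}

lemma conj_removeColumnEnds (hf : IsPartition f)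
    (hs : ∀ j ∈ s, conj f (j + 1) = conj f j → j + 1 ∈ s) {j : ℕ} (hj : 1 ≤ j) :
    conj (removeColumnEnds f s) j = conj f j - if j ∈ s then 1 else 0 := by
  rcases le_or_gt j (f 0) with hjf | hjf
  · refine conj_ofConj (fun k hk => ?_) hj hjf
    have := hf.conj_succ_le hk
    have := hs k
    grind
  · rw [removeColumnEnds, conj_eq_zero_of_lt (isPartition_ofConj _ _).1
      ((ofConj_le _ _ 0).trans_lt hjf), conj_eq_zero_of_lt hf.1 hjf, Nat.zero_sub]

lemma le_removeColumnEnds (hf : IsPartition f) (hg : IsPartition g) (hsub : ∀ i, g i ≤ f i)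
    (hadm : IsAdmissible (conj f) (conj g) s) (i : ℕ) : g i ≤ removeColumnEnds f s i := by
  have hβ : IsPartition (removeColumnEnds f s) := isPartition_ofConj _ _
  refine (hβ.le_iff_conj_le hg).mpr (fun j hj => ?_) i
  have := (hf.le_iff_conj_le hg).mp hsub j hj
  rw [conj_removeColumnEnds hf hadm.2 hj]
  split_ifs with hjs
  · have := hadm.1 j hjs
    omega
  · omega

lemma isHStrip_removeColumnEnds (hf : IsPartition f)
    (hs : ∀ j ∈ s, conj f (j + 1) = conj f j → j + 1 ∈ s) :
    IsHStrip f (removeColumnEnds f s) := by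
  have hc := fun j (hj : 1 ≤ j) => conj_removeColumnEnds hf hs hj
  have hβ : IsPartition (removeColumnEnds f s) := isPartition_ofConj _ _
  refine ⟨(hf.le_iff_conj_le hβ).mpr fun j hj => ?_, fun j hj => ?_⟩
  all_goals rw [hc j hj]; split_ifs <;> omega

lemma hasLength_removeColumnEnds (hf : IsPartition f) (hfl : HasLength f n)
    (hs : s ⊆ Ioc 1 (f 0)) (hadm : ∀ j ∈ s, conj f (j + 1) = conj f j → j + 1 ∈ s) :
    HasLength (removeColumnEnds f s) n := by
  have hβ : IsPartition (removeColumnEnds f s) := isPartition_ofConj _ _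
  rw [hβ.hasLength_iff, conj_removeColumnEnds hf hadm le_rfl, if_neg fun h => by simpa using hs h,
    hfl.conj_one, Nat.sub_zero]

lemma conj_eq_of_isHStrip (hf : IsPartition f) (hfl : HasLength f n) (hβ : IsPartition β)
    (hstrip : IsHStrip f β) (hβl : HasLength β n) {j : ℕ} (hj : 1 ≤ j) :
    conj β j = conj f j - if j ∈ changedColumns f β then 1 else 0 := by
  have hle := (hf.le_iff_conj_le hβ).mp hstrip.1 j hj
  have hge := hstrip.2 j hj
  have h1 : conj β 1 = conj f 1 := by rw [hfl.conj_one, hβl.conj_one]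
  have hJ : f 0 < j → conj f j = 0 := conj_eq_zero_of_lt hf.1
  simp only [changedColumns, mem_filter, mem_Ioc]
  split_ifs with h
  · omega
  · by_contra hne
    obtain rfl | hj1 := eq_or_lt_of_le hj
    · exact hne (by rw [h1, Nat.sub_zero])
    · rcases le_or_gt j (f 0) with hjf | hjf
      · exact h ⟨⟨hj1, hjf⟩, by omega⟩
      · have := hJ hjf
        omega

lemma changedColumns_isAdmissible (hf : IsPartition f) (hfl : HasLength f n) (hg : IsPartition g)
    (hβ : IsPartition β) (hgβ : ∀ i, g i ≤ β i) (hstrip : IsHStrip f β) (hβl : HasLength β n) :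
    IsAdmissible (conj f) (conj g) (changedColumns f β) := by
  have hc := fun j (hj : 1 ≤ j) => conj_eq_of_isHStrip hf hfl hβ hstrip hβl hj
  have hmem : ∀ j ∈ changedColumns f β, 1 ≤ j ∧ conj β j = conj f j - 1 := fun j hj => by
    have h1 : 1 ≤ j := by simp [changedColumns] at hj; omega
    exact ⟨h1, by rw [hc j h1, if_pos hj]⟩
  refine ⟨fun j hj => ?_, fun j hj heq => ?_⟩
  · obtain ⟨h1, hcj⟩ := hmem j hj
    have := (hβ.le_iff_conj_le hg).mp hgβ j h1
    have := (hf.le_iff_conj_le hβ).mp hstrip.1 j h1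
    simp only [changedColumns, mem_filter] at hj
    omega
  · obtain ⟨h1, hcj⟩ := hmem j hj
    have hsucc := hβ.conj_succ_le h1
    have hpos : 0 < conj f (j + 1) := by
      simp only [changedColumns, mem_filter] at hj
      omega
    have hjf : j + 1 ≤ f 0 := by
      by_contra! h
      rw [conj_eq_zero_of_lt hf.1 h] at hpos
      omega
    simp only [changedColumns, mem_filter, mem_Ioc]
    omega

lemma bijOn_removeColumnEnds (hf : IsPartition f) (hfl : HasLength f n) (hg : IsPartition g)
    (hsub : ∀ i, g i ≤ f i) :
    Set.BijOn (removeColumnEnds f) {s | s ⊆ Ioc 1 (f 0) ∧ IsAdmissible (conj f) (conj g) s}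
      {β | IsPartition β ∧ (∀ i, g i ≤ β i) ∧ IsHStrip f β ∧ HasLength β n} := by
  refine Set.InvOn.bijOn (f' := changedColumns f) ⟨fun s ⟨hs, hadm⟩ => ?_, ?_⟩
    (fun s ⟨hs, hadm⟩ => ⟨isPartition_ofConj _ _, le_removeColumnEnds hf hg hsub hadm,
      isHStrip_removeColumnEnds hf hadm.2, hasLength_removeColumnEnds hf hfl hs hadm.2⟩)
    (fun β ⟨hβ, hgβ, hstrip, hβl⟩ => ⟨filter_subset _ _,
      changedColumns_isAdmissible hf hfl hg hβ hgβ hstrip hβl⟩)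
  · ext j
    simp only [changedColumns, mem_filter, mem_Ioc]
    constructor
    · rintro ⟨⟨hj1, hjf⟩, hne⟩
      by_contra hjs
      exact hne (by rw [conj_removeColumnEnds hf hadm.2 hj1.le, if_neg hjs, Nat.sub_zero])
    · intro hjs
      have hj := mem_Ioc.mp (hs hjs)
      have := hf.conj_pos hj.1.le hj.2
      exact ⟨hj, by rw [conj_removeColumnEnds hf hadm.2 hj.1.le, if_pos hjs]; omega⟩
  · rintro β ⟨hβ, -, hstrip, hβl⟩
    refine (ofConj_congr fun j hj => ?_).trans (hβ.ofConj_conj (hstrip.1 0))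
    exact (conj_eq_of_isHStrip hf hfl hβ hstrip hβl (mem_Icc.mp hj).1).symm

end ColumnSets

section Assembly

variable {F : Type*} [Field F] {u : F} {f g β : ℕ → ℕ} {s : Finset ℕ}

lemma sk_eq_prod_skFactor : sk u f g = u ^ (∑ j ∈ Icc 1 (f 0), (conj f j - conj g j).choose 2) *
    ∏ j ∈ Icc 1 (f 0), skFactor u (conj f) (conj g) j := rfl

lemma pow_psize_sub_mul_sk (hβ : IsPartition β) (hg : IsPartition g) (hgβ : ∀ i, g i ≤ β i)
    {M : ℕ} (hM : β 0 ≤ M) :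
    u ^ (psize β - psize g) * sk u β g
      = ∏ j ∈ Icc 1 M, u ^ (conj β j - conj g j + (conj β j - conj g j).choose 2) *
          skFactor u (conj β) (conj g) j := by
  have hgβ' := (hβ.le_iff_conj_le hg).mp hgβ
  have hout : ∀ j ∈ Icc 1 M, j ∉ Icc 1 (β 0) →
      conj β j = 0 ∧ conj g j = 0 ∧ conj g (j + 1) = 0 := fun j hj hj' => by
    simp only [mem_Icc] at hj hj'
    have h0 := conj_eq_zero_of_lt hβ.1 (show β 0 < j by omega)
    have := hgβ' j hj.1
    have := hg.conj_succ_le hj.1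
    omega
  rw [hβ.psize_eq_sum_conj hM, hg.psize_eq_sum_conj ((hgβ 0).trans hM),
    ← sum_tsub_distrib _ fun j hj => hgβ' j (mem_Icc.mp hj).1, sk_eq_prod_skFactor,
    sum_subset (Icc_subset_Icc_right hM) fun j hj hj' => by simp [hout j hj hj'],
    prod_subset (Icc_subset_Icc_right hM) fun j hj hj' => by
      simp [skFactor, hout j hj hj', gauss, phiPoch],
    prod_mul_distrib, prod_pow_eq_pow_sum, sum_add_distrib, pow_add, mul_assoc]

lemma phiStrip_removeColumnEnds (hf : IsPartition f) (hs : s ⊆ Ioc 1 (f 0))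
    (hadm : ∀ j ∈ s, conj f (j + 1) = conj f j → j + 1 ∈ s) :
    phiStrip u f (removeColumnEnds f s) = ∏ j ∈ Icc 1 (f 0), linkWeight u (conj f) s j := by
  rw [phiStrip, if_pos (isHStrip_removeColumnEnds hf hadm), prod_filter]
  refine prod_congr rfl fun j hj => ?_
  have hj := mem_Icc.mp hj
  have hpos := hf.conj_pos hj.1 hj.2
  have hsucc : j + 1 ∈ s → 0 < conj f (j + 1) := fun h =>
    hf.conj_pos (by omega) (mem_Ioc.mp (hs h)).2
  rw [conj_removeColumnEnds hf hadm hj.1, conj_removeColumnEnds hf hadm (by omega), linkWeight]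
  congr 1
  grind

lemma pow_mul_skFactor_removeColumnEnds (hf : IsPartition f) (hg : IsPartition g)
    (hsub : ∀ i, g i ≤ f i) (hadm : IsAdmissible (conj f) (conj g) s) {j : ℕ} (hj : 1 ≤ j) :
    let c := conj (removeColumnEnds f s) j - conj g j
    u ^ (c + c.choose 2) * skFactor u (conj (removeColumnEnds f s)) (conj g) j
      = u ^ (conj f j - conj g j).choose 2 * colWeight u (conj f) (conj g) s j := by
  have hgf := (hf.le_iff_conj_le hg).mp hsub j hj
  simp only [skFactor, colWeight, conj_removeColumnEnds hf hadm.2 hj]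
  split_ifs with hjs
  · obtain ⟨x, hx⟩ : ∃ x, conj f j - conj g j = x + 1 := ⟨_, (Nat.succ_pred_eq_of_pos
      (Nat.sub_pos_of_lt (hadm.1 j hjs))).symm⟩
    rw [show conj f j - 1 - conj g j = x by omega, hx, Nat.choose_succ_succ', Nat.choose_one_right,
      Nat.cast_sub (by omega : 1 ≤ conj f j)]
    push_cast
    ring_nf
  · rw [Nat.sub_zero, pow_add]
    ring

lemma phiStrip_mul_pow_mul_sk_removeColumnEnds (hf : IsPartition f) (hg : IsPartition g)
    (hsub : ∀ i, g i ≤ f i) (hs : s ⊆ Ioc 1 (f 0)) (hadm : IsAdmissible (conj f) (conj g) s) :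
    phiStrip u f (removeColumnEnds f s) * u ^ (psize (removeColumnEnds f s) - psize g) *
        sk u (removeColumnEnds f s) g
      = u ^ (∑ j ∈ Icc 1 (f 0), (conj f j - conj g j).choose 2) *
          subsetWeight u (conj f) (conj g) (Icc 1 (f 0)) s := by
  rw [mul_assoc, phiStrip_removeColumnEnds hf hs hadm.2,
    pow_psize_sub_mul_sk (β := removeColumnEnds f s) (isPartition_ofConj _ _) hg
      (le_removeColumnEnds hf hg hsub hadm) (ofConj_le _ _ 0),
    prod_congr rfl fun j hj => pow_mul_skFactor_removeColumnEnds hf hg hsub hadm (mem_Icc.mp hj).1,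
    prod_mul_distrib, prod_pow_eq_pow_sum, subsetWeight]
  ring

lemma finsum_eq_sum_subsetWeight {n : ℕ} (hf : IsPartition f) (hfl : HasLength f n)
    (hg : IsPartition g) (hsub : ∀ i, g i ≤ f i) :
    (∑ᶠ (β : ℕ → ℕ) (_ : IsPartition β ∧ (∀ i, g i ≤ β i) ∧ IsHStrip f β ∧ HasLength β n),
        phiStrip u f β * u ^ (psize β - psize g) * sk u β g)
      = u ^ (∑ j ∈ Icc 1 (f 0), (conj f j - conj g j).choose 2) *
          ∑ s ∈ (Ioc 1 (f 0)).powerset, subsetWeight u (conj f) (conj g) (Icc 1 (f 0)) s := by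
  have hset : {s | s ⊆ Ioc 1 (f 0) ∧ IsAdmissible (conj f) (conj g) s}
      = ↑({s ∈ (Ioc 1 (f 0)).powerset | IsAdmissible (conj f) (conj g) s}) := by
    ext s
    simp
  refine (finsum_mem_eq_of_bijOn _ (bijOn_removeColumnEnds hf hfl hg hsub) fun s hs =>
    (phiStrip_mul_pow_mul_sk_removeColumnEnds hf hg hsub hs.1 hs.2).symm).symm.trans ?_
  rw [hset, finsum_mem_coe_finset, mul_sum]
  exact sum_filter_of_ne fun s hs hne => by_contra fun h => hne (mul_eq_zero_of_right _
    (subsetWeight_eq_zero ((mem_powerset.mp hs).trans Ioc_subset_Icc_self) h))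

theorem sum_phiStrip_mul_pow_mul_sk (hu : ∀ i, 1 ≤ i → (1 : F) - u ^ i ≠ 0) {n : ℕ} (hn : 1 ≤ n)
    (hf : IsPartition f) (hfl : HasLength f n) (hg : IsPartition g) (hgl : HasLength g (n - 1))
    (hsub : ∀ i, g i ≤ f i) :
    (∑ᶠ (β : ℕ → ℕ) (_ : IsPartition β ∧ (∀ i, g i ≤ β i) ∧ IsHStrip f β ∧ HasLength β n),
        phiStrip u f β * u ^ (psize β - psize g) * sk u β g) = u * sk u f g := by
  have hJ : 1 ≤ f 0 := hfl.1 0 hn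
  have hgf := (hf.le_iff_conj_le hg).mp hsub
  have hcol1 : conj f 1 - conj g 1 = 1 := by rw [hfl.conj_one, hgl.conj_one]; omega
  have htop : conj f (f 0 + 1) = conj g (f 0 + 1) := by
    rw [conj_eq_zero_of_lt hf.1 (by omega), conj_eq_zero_of_lt hg.1 (by have := hsub 0; omega)]
  rw [finsum_eq_sum_subsetWeight hf hfl hg hsub,
    sum_congr rfl fun s hs => subsetWeight_Icc hJ (mem_powerset.mp hs), ← mul_sum,
    sum_subsetWeight_Ioc hu hJ (fun j hj => hf.conj_succ_le (mem_Ioc.mp hj).1.le)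
      (fun j hj => hg.conj_succ_le (mem_Ioc.mp hj).1.le) (fun j hj => hgf j (mem_Ioc.mp hj).1.le)
      htop,
    sk_eq_prod_skFactor, ← Ioc_insert_left hJ, prod_insert left_notMem_Ioc, hcol1, pow_one]
  ring

end Assembly

lemma one_sub_X_pow_ne_zero {K : Type*} [Field K] {k : ℕ} (hk : 0 < k) :
    (1 : RatFunc K) - RatFunc.X ^ k ≠ 0 := by
  rw [← RatFunc.algebraMap_X, ← map_pow, ← map_one (algebraMap (Polynomial K) (RatFunc K)),
    ← map_sub, map_ne_zero_iff _ (RatFunc.algebraMap_injective K), ← neg_ne_zero, neg_sub,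
    ← Polynomial.C_1]
  exact Polynomial.X_pow_sub_C_ne_zero hk 1

/-- For partitions `λ` of length `n ≥ 1` and `μ ⊆ λ` of length `n-1`,
`Σ_β φ_{λ/β}(t²) t^{2(|β|-|μ|)} sk_{β/μ}(t²) = t² sk_{λ/μ}(t²)`, the sum being over all
partitions `β` with `μ ⊆ β`, `λ/β` a horizontal strip, and `l(β) = n`. -/
theorem stmt2 (n : ℕ) (hn : 1 ≤ n) (f g : ℕ → ℕ)
    (hf : IsPartition f) (hfl : HasLength f n)
    (hg : IsPartition g) (hgl : HasLength g (n - 1))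
    (hsub : ∀ i, g i ≤ f i) :
    (∑ᶠ (β : ℕ → ℕ)
        (_ : IsPartition β ∧ (∀ i, g i ≤ β i) ∧ IsHStrip f β ∧ HasLength β n),
        phiStrip ((RatFunc.X : RatFunc ℚ) ^ 2) f β *
          ((RatFunc.X : RatFunc ℚ) ^ 2) ^ (psize β - psize g) *
          sk ((RatFunc.X : RatFunc ℚ) ^ 2) β g)
      = (RatFunc.X : RatFunc ℚ) ^ 2 * sk ((RatFunc.X : RatFunc ℚ) ^ 2) f g :=
  sum_phiStrip_mul_pow_mul_sk (fun i hi => by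
    rw [← pow_mul]
    exact one_sub_X_pow_ne_zero (by omega)) hn hf hfl hg hgl hsub

end EK
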